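/- Let P be a G-structure on an n-manifold M (G ⊆ GL(n,ℝ)) with tautological form θ ∈ Ω¹(P,ℝⁿ), let 𝔨 denote ℝⁿ with an almost Lie bracket, let τ ∈ Ω¹(P,𝔤) be a principal connection with torsion T : ∧²ℝⁿ → ℝⁿ and curvature R : ∧²ℝⁿ → 𝔤 (so dθ = T(θ∧θ) − τ∧θ and dτ = R(θ∧θ) − τ∧τ), and set η = τ + θ ∈ Ω¹(P, 𝔤 ⋉ 𝔨). Then the curvature Ω^η = dη + ½[η,η]_{𝔤⋉𝔨} vanishes if and only if R = 0 and T = −[·,·]_𝔨. -/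
import Mathlib


/-- Let `P` be a `G`-structure on `Mⁿ` with tautological form `θ`, let `𝔨 = ℝⁿ` carry an
almost Lie bracket `Bk`, and let `τ` be a principal connection with torsion `Tor` and
curvature `R`, so that the Cartan structure equations hold:
`dθ = Tor(θ∧θ) − τ∧θ` and `dτ = R(θ∧θ) − τ∧τ`.
Set `η = τ + θ ∈ Ω¹(P, 𝔤 ⋉ 𝔨)`. Then the curvature `Ω^η = dη + ½[η,η]_{𝔤⋉𝔨}` vanishes
(both its `𝔤`-component `dτ(v,w) + [τv,τw]` and its `𝔨`-component
`dθ(v,w) + Bk(θv,θw) + (ρ(τv)(θw) − ρ(τw)(θv))`) if and only if `R = 0` and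
`Tor = −Bk`. -/
theorem stmt15
    {𝔤 : Type*} [LieRing 𝔤] [LieAlgebra ℝ 𝔤]
    {𝔨 : Type*} [AddCommGroup 𝔨] [Module ℝ 𝔨]
    (Bk : 𝔨 →ₗ[ℝ] 𝔨 →ₗ[ℝ] 𝔨)
    (ρ : 𝔤 →ₗ[ℝ] Module.End ℝ 𝔨)
    {P : Type*} [Nonempty P]
    (T : P → Type*) [∀ p, AddCommGroup (T p)] [∀ p, Module ℝ (T p)]
    (θ : ∀ p : P, T p →ₗ[ℝ] 𝔨)
    (hθsurj : ∀ p : P, Function.Surjective (θ p))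
    (τ : ∀ p : P, T p →ₗ[ℝ] 𝔤)
    (dθ : ∀ p : P, T p → T p → 𝔨) (dτ : ∀ p : P, T p → T p → 𝔤)
    (Tor : 𝔨 → 𝔨 → 𝔨) (R : 𝔨 → 𝔨 → 𝔤)
    (hstr1 : ∀ (p : P) (v w : T p),
      dθ p v w = Tor (θ p v) (θ p w) - (ρ (τ p v) (θ p w) - ρ (τ p w) (θ p v)))
    (hstr2 : ∀ (p : P) (v w : T p),
      dτ p v w = R (θ p v) (θ p w) - ⁅τ p v, τ p w⁆) :
    (∀ (p : P) (v w : T p),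
        ((dτ p v w + ⁅τ p v, τ p w⁆,
          dθ p v w + Bk (θ p v) (θ p w)
            + (ρ (τ p v) (θ p w) - ρ (τ p w) (θ p v))) : 𝔤 × 𝔨) = 0)
      ↔ ((∀ a b : 𝔨, R a b = 0) ∧ (∀ a b : 𝔨, Tor a b = - Bk a b)) := by
  constructor
  · intro h
    obtain ⟨p⟩ := (inferInstance : Nonempty P)
    constructor <;> intro a b <;>
      obtain ⟨v, hv⟩ := hθsurj p a <;> obtain ⟨w, hw⟩ := hθsurj p b <;>
      have h' := h p v w <;>
      rw [hstr1, hstr2, Prod.mk_eq_zero] at h' <;>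
      obtain ⟨h1, h2⟩ := h'
    · rw [← hv, ← hw]
      have : R (θ p v) (θ p w) = 0 := by linear_combination (norm := abel) h1
      exact this
    · rw [← hv, ← hw]
      have : Tor (θ p v) (θ p w) + Bk (θ p v) (θ p w) = 0 := by
        linear_combination (norm := abel) h2
      exact eq_neg_of_add_eq_zero_left this
  · rintro ⟨hR, hT⟩ p v w
    rw [hstr1, hstr2, Prod.mk_eq_zero, hR, hT]
    constructor <;> abel
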